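/- If D is a candidate and every one-step β-reduct of an application (t₁ t₂) belongs to D, then (t₁ t₂) itself belongs to D. -/
import Mathlib

/-- Terms of the λΠ-calculus. -/
inductive Tm where
  | var : String → Tm
  | type : Tm
  | kind : Tm
  | pi : String → Tm → Tm → Tm
  | lam : String → Tm → Tm → Tm
  | app : Tm → Tm → Tm
deriving DecidableEq

/-- Naive substitution (u/x)t. -/
def subst (u : Tm) (x : String) : Tm → Tm
  | .var y => if y = x then u else .var y
  | .type => .type
  | .kind => .kind
  | .pi y A B => .pi y (subst u x A) (if y = x then B else subst u x B)
  | .lam y A t => .lam y (subst u x A) (if y = x then t else subst u x t)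
  | .app t s => .app (subst u x t) (subst u x s)

/-- One step β-reduction (closed under subterms). -/
inductive Beta : Tm → Tm → Prop where
  | beta (x : String) (A t u : Tm) : Beta (.app (.lam x A t) u) (subst u x t)
  | appl {t t'} (u : Tm) : Beta t t' → Beta (.app t u) (.app t' u)
  | appr (t : Tm) {u u'} : Beta u u' → Beta (.app t u) (.app t u')
  | lamA (x : String) {A A'} (t : Tm) : Beta A A' → Beta (.lam x A t) (.lam x A' t)
  | lamT (x : String) (A : Tm) {t t'} : Beta t t' → Beta (.lam x A t) (.lam x A t')
  | piA (x : String) {A A'} (B : Tm) : Beta A A' → Beta (.pi x A B) (.pi x A' B)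
  | piB (x : String) (A : Tm) {B B'} : Beta B B' → Beta (.pi x A B) (.pi x A B')

/-- Strong β-termination. -/
def SN (t : Tm) : Prop := Acc (fun a b => Beta b a) t

/-- Reflexive-transitive closure of β. -/
def BetaStar : Tm → Tm → Prop := Relation.ReflTransGen Beta

/-- The operation Π̃(C,S) on sets of terms. -/
def PiTilde (C : Set Tm) (S : Set (Set Tm)) : Set Tm :=
  {t | SN t ∧ ∀ x A t', BetaStar t (.lam x A t') →
    ∀ u ∈ C, ∀ D ∈ S, subst u x t' ∈ D}

/-- Reducibility candidates. -/
inductive Cand : Set Tm → Prop where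
  | sn : Cand {t | SN t}
  | pi {C : Set Tm} {S : Set (Set Tm)} : Cand C → (∀ D ∈ S, Cand D) → Cand (PiTilde C S)
  | inter {S : Set (Set Tm)} : (∀ D ∈ S, Cand D) → Cand (⋂₀ S)

/-- If every one-step β-reduct of an application belongs to a candidate D,
then the application itself belongs to D. -/
theorem app_mem_of_reducts (D : Set Tm) (hD : Cand D) (t₁ t₂ : Tm)
    (h : ∀ u, Beta (Tm.app t₁ t₂) u → u ∈ D) : Tm.app t₁ t₂ ∈ D := by
  induction hD with
  | sn => exact Acc.intro _ (fun u hu => h u hu)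
  | @pi C S _ _ _ _ =>
    refine ⟨Acc.intro _ (fun u hu => ((h u hu).1)), ?_⟩
    intro x A t' hstar u hu E hE
    rcases (Relation.ReflTransGen.cases_head hstar) with heq | ⟨v, hv, hstar'⟩
    · exact absurd heq (by simp)
    · exact (h v hv).2 x A t' hstar' u hu E hE
  | inter hS ih =>
    intro E hE
    exact ih E hE (fun u hu => h u hu E hE)
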